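/- arXiv:2205.12267 — 3 statements merged into one kernel-verified Lean document; each statement's English description precedes it below -/
import Mathlib

section
/- Let A be a real l×l matrix whose spectral radius ρ(A) (the largest absolute value of its complex eigenvalues) satisfies ρ(A) ≥ 1, let W be a symmetric positive definite real l×l matrix, let P̄ be a symmetric positive semidefinite real l×l matrix, and let f(X) = A X Aᵀ + W. Then Tr(f^τ(P̄)) ≥ τ · λ_min(W) for every natural number τ, where λ_min(W) > 0 is the smallest eigenvalue of W; in particular, Tr(f^τ(P̄)) → ∞ as τ → ∞, i.e., the remote estimation cost grows unboundedly with continuously increasing age of information. -/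
open Matrix Filter

/-- The spectral radius of a real square matrix: the largest absolute value of its
complex eigenvalues. -/
noncomputable def specRad {l : ℕ} (A : Matrix (Fin l) (Fin l) ℝ) : ℝ :=
  sSup ((fun z : ℂ => ‖z‖) '' spectrum ℂ (A.map (algebraMap ℝ ℂ)))

/-!
Unrolling the recursion, `f^τ(P̄) = A^τ P̄ (A^τ)ᵀ + ∑_{k<τ} A^k W (A^k)ᵀ`, and in the Loewner
order `W ≥ λ_min(W) • 1` and `P̄ ≥ 0`, so `Tr f^τ(P̄) ≥ λ_min(W) ∑_{k<τ} ‖A^k‖_F²`. An eigenvalue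
`z` of `A` with `|z| = ρ(A) ≥ 1` gives `‖A^k‖_F ≥ |z|^k ≥ 1`, since the Frobenius norm is
submultiplicative and `A^k v = z^k v` for an eigenvector `v`. Hence every term of the sum is at
least `λ_min(W)`.
-/

open scoped MatrixOrder ComplexOrder Matrix.Norms.Frobenius

open Finset in
theorem sum_conj_pow_le_iterate {R : Type*} [Semiring R] [PartialOrder R] [StarRing R]
    [StarOrderedRing R] {a b w p : R} (hbw : b ≤ w) (hp : 0 ≤ p) (τ : ℕ) :
    ∑ k ∈ range τ, a ^ k * b * star (a ^ k) ≤ (fun z => a * z * star a + w)^[τ] p := by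
  induction τ with
  | zero => simpa using hp
  | succ τ ih =>
    have hsucc : ∑ k ∈ range (τ + 1), a ^ k * b * star (a ^ k)
        = a * (∑ k ∈ range τ, a ^ k * b * star (a ^ k)) * star a + b := by
      simp only [sum_range_succ', pow_succ', star_mul, mul_sum, sum_mul, pow_zero, star_one,
        mul_one, one_mul, mul_assoc]
    rw [hsucc, Function.iterate_succ_apply']
    exact add_le_add (star_right_conjugate_le_conjugate ih a) hbw

namespace Matrix

variable {n 𝕜 : Type*} [Fintype n] [RCLike 𝕜]

theorem IsHermitian.iInf_eigenvalues_smul_one_le [DecidableEq n] {W : Matrix n n 𝕜}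
    (hW : W.IsHermitian) : (⨅ i, hW.eigenvalues i) • (1 : Matrix n n 𝕜) ≤ W := by
  rw [← Algebra.algebraMap_eq_smul_one, algebraMap_le_iff_le_spectrum hW,
    hW.spectrum_real_eq_range_eigenvalues]
  rintro _ ⟨i, rfl⟩
  exact ciInf_le (Finite.bddBelow_range _) i

theorem PosDef.iInf_eigenvalues_pos [DecidableEq n] [Nonempty n] {W : Matrix n n 𝕜}
    (hW : W.PosDef) : 0 < ⨅ i, hW.1.eigenvalues i := by
  obtain ⟨i, hi⟩ := exists_eq_ciInf_of_finite (f := hW.1.eigenvalues)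
  exact hi ▸ hW.eigenvalues_pos i

theorem norm_le_frobenius_norm_of_mem_spectrum [DecidableEq n] {M : Matrix n n 𝕜} {z : 𝕜}
    (hz : z ∈ spectrum 𝕜 M) : ‖z‖ ≤ ‖M‖ := by
  rw [spectrum.mem_iff, isUnit_iff_isUnit_det, isUnit_iff_ne_zero, not_not,
    ← exists_mulVec_eq_zero_iff] at hz
  obtain ⟨v, hv0, hv⟩ := hz
  rw [Algebra.algebraMap_eq_smul_one, sub_mulVec, smul_mulVec, one_mulVec, sub_eq_zero] at hv
  have hMv : M * replicateCol (Fin 1) v = z • replicateCol (Fin 1) v := by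
    rw [← replicateCol_mulVec, ← hv, replicateCol_smul]
  have hv_pos : 0 < ‖replicateCol (Fin 1) v‖ := norm_pos_iff.mpr (by simpa using hv0)
  refine le_of_mul_le_mul_right ?_ hv_pos
  calc ‖z‖ * ‖replicateCol (Fin 1) v‖ = ‖M * replicateCol (Fin 1) v‖ := by rw [hMv, norm_smul]
    _ ≤ ‖M‖ * ‖replicateCol (Fin 1) v‖ := frobenius_norm_mul _ _

theorem frobenius_norm_sq_eq_trace {m : Type*} [Fintype m] (B : Matrix m n ℝ) :
    ‖B‖ ^ 2 = (B * Bᵀ).trace := by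
  rw [frobenius_norm_def, ← Real.sqrt_eq_rpow, Real.sq_sqrt (by positivity)]
  simp [trace, mul_apply, sq]

end Matrix

section

variable {l : ℕ} [NeZero l]

theorem exists_mem_spectrum_norm_eq_specRad (A : Matrix (Fin l) (Fin l) ℝ) :
    ∃ z ∈ spectrum ℂ (A.map (algebraMap ℝ ℂ)), ‖z‖ = specRad A := by
  have hspec := spectrum.nonempty_of_isAlgClosed_of_finiteDimensional ℂ (A.map (algebraMap ℝ ℂ))
  exact (hspec.image (‖·‖)).csSup_mem ((finite_spectrum _).image _)

theorem specRad_pow_le_frobenius_norm_pow (A : Matrix (Fin l) (Fin l) ℝ) (k : ℕ) :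
    specRad A ^ k ≤ ‖A ^ k‖ := by
  obtain ⟨z, hz, hnorm⟩ := exists_mem_spectrum_norm_eq_specRad A
  have hpow : z ^ k ∈ spectrum ℂ ((A ^ k).map (algebraMap ℝ ℂ)) := by
    rw [Matrix.map_pow]
    exact spectrum.pow_mem_pow _ k hz
  calc specRad A ^ k = ‖z ^ k‖ := by rw [norm_pow, hnorm]
    _ ≤ ‖(A ^ k).map (algebraMap ℝ ℂ)‖ := norm_le_frobenius_norm_of_mem_spectrum hpow
    _ = ‖A ^ k‖ := frobenius_norm_map_eq _ _ fun x => by simp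

theorem one_le_trace_pow_mul_transpose {A : Matrix (Fin l) (Fin l) ℝ} (hρ : 1 ≤ specRad A) (k : ℕ) :
    1 ≤ (A ^ k * (A ^ k)ᵀ).trace := by
  rw [← frobenius_norm_sq_eq_trace]
  exact one_le_pow₀ ((one_le_pow₀ hρ).trans (specRad_pow_le_frobenius_norm_pow A k))

open Finset in
theorem natCast_le_trace_sum_pow_mul_transpose {A : Matrix (Fin l) (Fin l) ℝ}
    (hρ : 1 ≤ specRad A) (τ : ℕ) :
    (τ : ℝ) ≤ (∑ k ∈ range τ, A ^ k * (A ^ k)ᵀ).trace :=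
  calc (τ : ℝ) = ∑ k ∈ range τ, 1 := by simp
    _ ≤ ∑ k ∈ range τ, (A ^ k * (A ^ k)ᵀ).trace :=
      sum_le_sum fun k _ => one_le_trace_pow_mul_transpose hρ k
    _ = _ := (trace_sum ..).symm

end

open Finset in
theorem smul_sum_pow_mul_transpose_le_iterate {l : ℕ} {A W P : Matrix (Fin l) (Fin l) ℝ}
    (hW : W.IsHermitian) (hP : P.PosSemidef) (τ : ℕ) :
    (⨅ i, hW.eigenvalues i) • ∑ k ∈ range τ, A ^ k * (A ^ k)ᵀ ≤
      (fun Z => A * Z * Aᵀ + W)^[τ] P := by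
  have h := sum_conj_pow_le_iterate (a := A) hW.iInf_eigenvalues_smul_one_le hP.nonneg τ
  simpa only [star_eq_conjTranspose, conjTranspose_eq_transpose_of_trivial, Matrix.mul_smul,
    Matrix.smul_mul, mul_one, smul_sum] using h

/-- If `ρ(A) ≥ 1` and `W` is positive definite, the estimation cost `Tr(f^τ(P̄))`
grows at least linearly as `τ · λ_min(W)` with `λ_min(W) > 0`, hence it tends to
infinity as the age of information `τ` grows. -/
theorem cost_unbounded_of_unstable {l : ℕ} [NeZero l]
    (A W Pbar : Matrix (Fin l) (Fin l) ℝ)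
    (hW : W.PosDef) (hP : Pbar.PosSemidef) (hρ : 1 ≤ specRad A) :
    0 < (⨅ i, hW.1.eigenvalues i) ∧
    (∀ τ : ℕ, (τ : ℝ) * (⨅ i, hW.1.eigenvalues i) ≤
      ((fun Z : Matrix (Fin l) (Fin l) ℝ => A * Z * Aᵀ + W)^[τ] Pbar).trace) ∧
    Tendsto (fun τ : ℕ =>
        ((fun Z : Matrix (Fin l) (Fin l) ℝ => A * Z * Aᵀ + W)^[τ] Pbar).trace)
      atTop atTop := by
  have hc := hW.iInf_eigenvalues_pos
  have hlinear : ∀ τ : ℕ, (τ : ℝ) * (⨅ i, hW.1.eigenvalues i) ≤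
      ((fun Z : Matrix (Fin l) (Fin l) ℝ => A * Z * Aᵀ + W)^[τ] Pbar).trace := fun τ =>
    calc (τ : ℝ) * (⨅ i, hW.1.eigenvalues i)
        ≤ (⨅ i, hW.1.eigenvalues i) * (∑ k ∈ Finset.range τ, A ^ k * (A ^ k)ᵀ).trace := by
          rw [mul_comm]
          exact mul_le_mul_of_nonneg_left (natCast_le_trace_sum_pow_mul_transpose hρ τ) hc.le
      _ ≤ _ := by
          rw [← smul_eq_mul, ← trace_smul]
          exact OrderHomClass.mono (tracePositiveLinearMap (Fin l) ℝ ℝ)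
            (smul_sum_pow_mul_transpose_le_iterate hW.1 hP τ)
  exact ⟨hc, hlinear, tendsto_atTop_mono hlinear
    (tendsto_natCast_atTop_atTop.atTop_mul_const hc)⟩
end

section
/- Let A be a real l×l matrix, W and P symmetric positive semidefinite real l×l matrices, and f(X) = A X Aᵀ + W. Then for every natural number τ, Tr(f^τ(P)) ≤ ‖A‖^{2τ} · Tr(P) + Tr(W) · Σ_{k=0}^{τ−1} ‖A‖^{2k}, where ‖A‖ denotes the operator (spectral) norm of A. -/
open Matrix
open scoped Matrix.Norms.L2Operator

/-!
Writing a positive semidefinite `X` as `Bᵀ B`, the trace of `A X Aᵀ` is the sum of the squared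
lengths of the vectors `A bₖ` for the rows `bₖ` of `B`, while `tr X = ∑ₖ ‖bₖ‖²`; hence
`tr (A X Aᵀ) ≤ ‖A‖² tr X`. Since `f` preserves positive semidefiniteness, the traces of the
iterates satisfy `tₙ₊₁ ≤ ‖A‖² tₙ + tr W`, and unrolling this linear recursion gives the bound.
-/

theorem le_pow_mul_add_mul_geom_sum {α : Type*} [CommSemiring α] [PartialOrder α]
    [IsOrderedRing α] {a w : α} (ha : 0 ≤ a) {t : ℕ → α} (ht : ∀ n, t (n + 1) ≤ a * t n + w)
    (n : ℕ) : t n ≤ a ^ n * t 0 + w * ∑ k ∈ Finset.range n, a ^ k := by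
  induction n with
  | zero => simp
  | succ n ih =>
    calc t (n + 1) ≤ a * t n + w := ht n
      _ ≤ a * (a ^ n * t 0 + w * ∑ k ∈ Finset.range n, a ^ k) + w := by gcongr
      _ = a ^ (n + 1) * t 0 + w * ∑ k ∈ Finset.range (n + 1), a ^ k := by
        rw [geom_sum_succ]; ring

namespace Matrix

variable {m n : Type*} [Fintype m] [Fintype n]

lemma sum_sq_mulVec_le [DecidableEq n] (A : Matrix m n ℝ) (v : n → ℝ) :
    ∑ i, (A *ᵥ v) i ^ 2 ≤ ‖A‖ ^ 2 * ∑ j, v j ^ 2 := by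
  have h := pow_le_pow_left₀ (norm_nonneg _) (A.l2_opNorm_mulVec (WithLp.toLp 2 v)) 2
  rw [mul_pow, EuclideanSpace.norm_sq_eq, EuclideanSpace.norm_sq_eq] at h
  simpa using h

lemma trace_transpose_mul_self (B : Matrix m n ℝ) :
    (Bᵀ * B).trace = ∑ k, ∑ j, B k j ^ 2 := by
  simp only [trace, diag, mul_apply, transpose_apply, sq]
  exact Finset.sum_comm

lemma PosSemidef.exists_eq_transpose_mul_self [DecidableEq n] {X : Matrix n n ℝ}
    (hX : X.PosSemidef) : ∃ B : Matrix n n ℝ, X = Bᵀ * B := by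
  open scoped MatrixOrder in
  refine ⟨CFC.sqrt X, ?_⟩
  rw [← conjTranspose_eq_transpose_of_trivial, (CFC.sqrt_nonneg X).posSemidef.1,
    CFC.sqrt_mul_sqrt_self X hX.nonneg]

lemma trace_mul_mul_transpose_le [DecidableEq n] (A : Matrix m n ℝ) {X : Matrix n n ℝ}
    (hX : X.PosSemidef) : (A * X * Aᵀ).trace ≤ ‖A‖ ^ 2 * X.trace := by
  obtain ⟨B, rfl⟩ := hX.exists_eq_transpose_mul_self
  have hconj : A * (Bᵀ * B) * Aᵀ = (B * Aᵀ)ᵀ * (B * Aᵀ) := by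
    simp only [transpose_mul, transpose_transpose, Matrix.mul_assoc]
  have hrow : ∀ k, (B * Aᵀ) k = A *ᵥ B k := fun k => by
    ext i; simp [mul_apply, mulVec, dotProduct, mul_comm]
  rw [hconj, trace_transpose_mul_self, trace_transpose_mul_self, Finset.mul_sum]
  refine Finset.sum_le_sum fun k _ => ?_
  rw [hrow]
  exact sum_sq_mulVec_le A (B k)

end Matrix

/-- Trace bound on the iterates of `X ↦ A X Aᵀ + W` in terms of the operator
(spectral) norm of `A`. -/
theorem iterate_affine_trace_le {l : ℕ} (A W P : Matrix (Fin l) (Fin l) ℝ)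
    (hW : W.PosSemidef) (hP : P.PosSemidef) (τ : ℕ) :
    ((fun Z : Matrix (Fin l) (Fin l) ℝ => A * Z * Aᵀ + W)^[τ] P).trace ≤
      ‖A‖ ^ (2 * τ) * P.trace + W.trace * ∑ k ∈ Finset.range τ, ‖A‖ ^ (2 * k) := by
  set f : Matrix (Fin l) (Fin l) ℝ → Matrix (Fin l) (Fin l) ℝ := fun Z => A * Z * Aᵀ + W
  have hpsd (n : ℕ) : (f^[n] P).PosSemidef :=
    Function.Iterate.rec _ hP (fun X hX => (hX.mul_mul_conjTranspose_same A).add hW) n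
  have hstep (n : ℕ) : (f^[n + 1] P).trace ≤ ‖A‖ ^ 2 * (f^[n] P).trace + W.trace := by
    rw [Function.iterate_succ_apply', trace_add]
    exact add_le_add_left (trace_mul_mul_transpose_le A (hpsd n)) _
  simpa only [pow_mul, Function.iterate_zero_apply] using
    le_pow_mul_add_mul_geom_sum (t := fun n => (f^[n] P).trace) (sq_nonneg ‖A‖) hstep τ
end

section
/- Fix a blocklength l > 0 and a number of data bits b ≥ 0, and define the finite-blocklength decoding failure probability ε(γ) = Q( (C(γ) − b/l) / √(V(γ)/l) ) for γ > 0, where C(γ) = log₂(1+γ), V(γ) = (1 − (1+γ)⁻²)(log₂ e)², and Q(x) = (1/√(2π)) ∫_x^∞ e^{−t²/2} dt. Then ε is strictly decreasing on (0, ∞): for all 0 < γ₁ < γ₂ one has ε(γ₂) < ε(γ₁). In particular, the argument map γ ↦ (ln(1+γ) − c)/√(1 − (1+γ)⁻²) is strictly increasing on (0, ∞) for every constant c ≥ 0. -/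
/-!
`Q` is strictly decreasing, and after substituting `log₂ x = ln x / ln 2` the argument of `Q` in
`ε(γ)` is `√l · f(1 + γ)` with `f(u) = (ln u - c)/√(1 - u⁻²)` and `c = b ln 2 / l ≥ 0`. So it
suffices that `f` is strictly increasing on `(1, ∞)`, and indeed
`f'(u) = (u² - 1 - (ln u - c)) / (u³ (1 - u⁻²)^{3/2})`, whose numerator is positive because
`ln u ≤ u - 1 < u² - 1`.
-/

open MeasureTheory

/-- The Gaussian Q-function `Q(x) = (1/√(2π)) ∫_x^∞ e^{-t²/2} dt`. -/
noncomputable def gaussQ (x : ℝ) : ℝ :=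
  (Real.sqrt (2 * Real.pi))⁻¹ * ∫ t in Set.Ioi x, Real.exp (-t ^ 2 / 2)

/-- Shannon capacity `C(γ) = log₂(1+γ)`. -/
noncomputable def shannonC (γ : ℝ) : ℝ := Real.logb 2 (1 + γ)

/-- Channel dispersion `V(γ) = (1 - (1+γ)⁻²)(log₂ e)²`. -/
noncomputable def dispersionV (γ : ℝ) : ℝ :=
  (1 - ((1 + γ) ^ 2)⁻¹) * (Real.logb 2 (Real.exp 1)) ^ 2

/-- Finite-blocklength decoding failure probability
`ε(γ) = Q((C(γ) - b/l)/√(V(γ)/l))`. -/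
noncomputable def decodingFailure (l b γ : ℝ) : ℝ :=
  gaussQ ((shannonC γ - b / l) / Real.sqrt (dispersionV γ / l))

open Real Set

lemma integrable_exp_neg_sq_div_two : Integrable fun t : ℝ => exp (-t ^ 2 / 2) := by
  convert integrable_exp_neg_mul_sq (by norm_num : (0 : ℝ) < 1 / 2) using 2 with t
  ring_nf

lemma gaussQ_strictAnti : StrictAnti gaussQ := by
  intro x y hxy
  have hint := integrable_exp_neg_sq_div_two
  have hsplit : ∫ t in Ioi x, exp (-t ^ 2 / 2) =
      (∫ t in Ioc x y, exp (-t ^ 2 / 2)) + ∫ t in Ioi y, exp (-t ^ 2 / 2) := by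
    rw [← setIntegral_union (Ioc_disjoint_Ioi le_rfl) measurableSet_Ioi
      hint.integrableOn hint.integrableOn, Ioc_union_Ioi_eq_Ioi hxy.le]
  have hpos : 0 < ∫ t in Ioc x y, exp (-t ^ 2 / 2) := by
    rw [← intervalIntegral.integral_of_le hxy.le]
    exact intervalIntegral.intervalIntegral_pos_of_pos hint.intervalIntegrable
      (fun t => exp_pos _) hxy
  unfold gaussQ
  gcongr
  linarith

lemma one_sub_inv_sq_pos {u : ℝ} (hu : 1 < u) : 0 < 1 - (u ^ 2)⁻¹ :=
  sub_pos.2 (inv_lt_one_of_one_lt₀ (one_lt_pow₀ hu two_ne_zero))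

lemma hasDerivAt_log_sub_div_sqrt_one_sub_inv_sq (c : ℝ) {u : ℝ} (hu : 1 < u) :
    HasDerivAt (fun u : ℝ => (log u - c) / √(1 - (u ^ 2)⁻¹))
      ((u ^ 2 - 1 - (log u - c)) / (u ^ 3 * √(1 - (u ^ 2)⁻¹) ^ 3)) u := by
  have hu0 : u ≠ 0 := by positivity
  have hg := one_sub_inv_sq_pos hu
  have hsq : HasDerivAt (fun u : ℝ => 1 - (u ^ 2)⁻¹) (2 / u ^ 3) u :=
    (((hasDerivAt_pow 2 u).inv (pow_ne_zero 2 hu0)).const_sub 1).congr_deriv (by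
      field_simp; ring)
  have hs : 0 < √(1 - (u ^ 2)⁻¹) := sqrt_pos.2 hg
  refine (((hasDerivAt_log hu0).sub_const c).div (hsq.sqrt hg.ne') hs.ne').congr_deriv ?_
  have hs2 : √(1 - (u ^ 2)⁻¹) ^ 2 * u ^ 2 = u ^ 2 - 1 := by
    rw [sq_sqrt hg.le]; field_simp
  generalize √(1 - (u ^ 2)⁻¹) = s at hs hs2 ⊢
  field_simp
  linear_combination hs2

lemma strictMonoOn_log_sub_div_sqrt_one_sub_inv_sq {c : ℝ} (hc : 0 ≤ c) :
    StrictMonoOn (fun u : ℝ => (log u - c) / √(1 - (u ^ 2)⁻¹)) (Ioi 1) := by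
  refine strictMonoOn_of_deriv_pos (convex_Ioi 1)
    (fun u hu => (hasDerivAt_log_sub_div_sqrt_one_sub_inv_sq c hu).continuousAt.continuousWithinAt)
    fun u hu => ?_
  rw [interior_Ioi] at hu
  have hu : 1 < u := hu
  rw [(hasDerivAt_log_sub_div_sqrt_one_sub_inv_sq c hu).deriv]
  have hlog : log u ≤ u - 1 := log_le_sub_one_of_pos (by positivity)
  have hs : 0 < √(1 - (u ^ 2)⁻¹) := sqrt_pos.2 (one_sub_inv_sq_pos hu)
  exact div_pos (by nlinarith) (by positivity)

lemma decodingFailure_eq_gaussQ {l : ℝ} (hl : 0 < l) (b γ : ℝ) :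
    decodingFailure l b γ =
      gaussQ (√l * ((log (1 + γ) - b * log 2 / l) / √(1 - ((1 + γ) ^ 2)⁻¹))) := by
  unfold decodingFailure shannonC dispersionV
  rw [mul_div_assoc, sqrt_mul' _ (by positivity), sqrt_div' _ hl.le, sqrt_sq]
  · simp only [logb, log_exp]
    generalize √(1 - ((1 + γ) ^ 2)⁻¹) = s
    field_simp
  · simp only [logb, log_exp]
    exact div_nonneg zero_le_one (log_nonneg one_le_two)

/-- The finite-blocklength decoding failure probability is strictly decreasing in
the SNR on `(0, ∞)`; in particular, for every `c ≥ 0` the map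
`γ ↦ (ln(1+γ) - c)/√(1 - (1+γ)⁻²)` is strictly increasing on `(0, ∞)`. -/
theorem decodingFailure_strictAnti (l b : ℝ) (hl : 0 < l) (hb : 0 ≤ b) :
    (∀ γ₁ γ₂ : ℝ, 0 < γ₁ → γ₁ < γ₂ →
      decodingFailure l b γ₂ < decodingFailure l b γ₁) ∧
    (∀ c : ℝ, 0 ≤ c →
      StrictMonoOn (fun γ : ℝ => (Real.log (1 + γ) - c) / Real.sqrt (1 - ((1 + γ) ^ 2)⁻¹))
        (Set.Ioi (0 : ℝ))) := by
  have hmono : ∀ c : ℝ, 0 ≤ c →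
      StrictMonoOn (fun γ : ℝ => (log (1 + γ) - c) / √(1 - ((1 + γ) ^ 2)⁻¹)) (Ioi 0) :=
    fun c hc => (strictMonoOn_log_sub_div_sqrt_one_sub_inv_sq hc).comp
      (fun _ _ _ _ h => by simpa using h) fun γ (hγ : 0 < γ) => by simpa using hγ
  refine ⟨fun γ₁ γ₂ h₁ h₁₂ => ?_, hmono⟩
  have hc : 0 ≤ b * log 2 / l := by have := log_nonneg one_le_two; positivity
  rw [decodingFailure_eq_gaussQ hl, decodingFailure_eq_gaussQ hl]
  exact gaussQ_strictAnti <| mul_lt_mul_of_pos_left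
    (hmono _ hc h₁ (h₁.trans h₁₂) h₁₂) (sqrt_pos.2 hl)
end
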